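/- arXiv:2604.03825 — 2 statements merged into one kernel-verified Lean document; each statement's English description precedes it below -/
import Mathlib

section
/- Let L be a first-order language, M a nonempty L-structure, and code : L.Formula (Fin 1) → M any assignment of elements of M to unary L-formulas. Then there is no L-formula S in two free variables such that for every unary L-formula φ and every x ∈ M, M satisfies S(code φ, x) if and only if M satisfies φ(x). -/
open FirstOrder

/-- Tarski's undefinability of satisfaction (model-theoretic form): for a nonempty
`L`-structure `M` and any coding of unary `L`-formulas by elements of `M`, no binary
`L`-formula defines satisfaction of unary formulas via the coding. -/
theorem tarski_undefinability (L : FirstOrder.Language) (M : Type*) [L.Structure M]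
    [Nonempty M] (code : L.Formula (Fin 1) → M) :
    ¬ ∃ S : L.Formula (Fin 2), ∀ (φ : L.Formula (Fin 1)) (x : M),
        S.Realize ![code φ, x] ↔ φ.Realize ![x] := by
  rintro ⟨S, hS⟩
  set R : L.Formula (Fin 1) := (S.relabel (fun _ => (0 : Fin 1))).not with hR
  have h := hS R (code R)
  have hr : R.Realize ![code R] ↔ ¬ S.Realize ![code R, code R] := by
    rw [hR, Language.Formula.realize_not, Language.Formula.realize_relabel]
    constructor <;> intro h' h'' <;> apply h' <;>
      · convert h'' using 1
        funext i
        fin_cases i <;> simp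
  rw [hr] at h
  tauto
end

section
/- Let L be a countable first-order language containing a binary relation symbol E, and let T be an L-theory. Call an extension N of a substructure M an 'end extension' if for all a ∈ M and b ∈ N, if N ⊨ b E a then b ∈ M. Assume that every countable model of T has a proper countable elementary end extension. Then every countable model of T has an elementary end extension N which is ℵ₁-like, i.e., N has cardinality ℵ₁ but for every a ∈ N the set {b ∈ N : N ⊨ b E a} is countable. -/
/-!
Fix a set `Ω` of size `ℵ₁` and consider the structures on subsets of `Ω` that are elementary
end extensions of (a copy of) `M` in which every `e`-segment `{b | b e a}` is countable, ordered
by "elementary end extension via the inclusion". A chain has an upper bound in this class: its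
union is an elementary extension of every member by the elementary chain theorem; it is an end
extension because an element below `a` that appears at a later stage is pulled back by end-ness;
so each segment of the union is a segment of some member. Zorn's lemma gives a maximal such
structure `m`. If `m` were countable, the hypothesis would give a proper countable elementary end
extension, which fits into `Ω` because `Ω ∖ m` is uncountable, contradicting maximality. Hence
`#m = ℵ₁`. This replaces the `ω₁`-iteration and the regularity of `ω₁`.
-/

open FirstOrder Language Structure Cardinal

theorem Countable.exists_injective_of_infinite (α β : Type*) [Countable α] [Infinite β] :
    ∃ g : α → β, g.Injective :=
  let ⟨f, hf⟩ := Countable.exists_injective_nat α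
  ⟨Infinite.natEmbedding β ∘ f, (Infinite.natEmbedding β).injective.comp hf⟩

theorem Function.Injective.injective_extend {α β γ : Type*} {f : α → β} {g : α → γ}
    {j : β → γ} (hf : f.Injective) (hg : g.Injective) (hj : j.Injective)
    (hgj : Disjoint (Set.range g) (Set.range j)) : (Function.extend f g j).Injective := by
  intro x y hxy
  by_cases hx : ∃ a, f a = x <;> by_cases hy : ∃ a, f a = y
  · obtain ⟨a, rfl⟩ := hx
    obtain ⟨b, rfl⟩ := hy
    rw [hf.extend_apply, hf.extend_apply] at hxy
    rw [hg hxy]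
  · obtain ⟨a, rfl⟩ := hx
    rw [hf.extend_apply, Function.extend_apply' _ _ _ hy] at hxy
    exact (hgj.ne_of_mem ⟨a, rfl⟩ ⟨y, rfl⟩ hxy).elim
  · obtain ⟨b, rfl⟩ := hy
    rw [hf.extend_apply, Function.extend_apply' _ _ _ hx] at hxy
    exact (hgj.ne_of_mem ⟨b, rfl⟩ ⟨x, rfl⟩ hxy.symm).elim
  · rw [Function.extend_apply' _ _ _ hx, Function.extend_apply' _ _ _ hy] at hxy
    exact hj hxy

namespace FirstOrder.Language

variable {L : Language}

namespace ElementaryEmbedding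

variable {M N P : Type*} [L.Structure M] [L.Structure N] [L.Structure P] (e : L.Relations 2)

theorem map_rel₂ (f : M ↪ₑ[L] N) (a b : M) : RelMap e ![f a, f b] ↔ RelMap e ![a, b] := by
  rw [← f.map_rel e (![a, b]), ← FinVec.map_eq]
  rfl

def IsEnd (f : M ↪ₑ[L] N) : Prop :=
  ∀ (a : M) (b : N), RelMap e ![b, f a] → b ∈ Set.range f

variable {e}

theorem isEnd_of_surjective {f : M ↪ₑ[L] N} (hf : Function.Surjective f) : f.IsEnd e :=
  fun _ b _ => hf b

theorem IsEnd.comp {g : N ↪ₑ[L] P} {f : M ↪ₑ[L] N} (hg : g.IsEnd e) (hf : f.IsEnd e) :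
    (g.comp f).IsEnd e := by
  intro a b hb
  obtain ⟨y, rfl⟩ := hg (f a) b hb
  obtain ⟨x, rfl⟩ := hf a y ((g.map_rel₂ e y (f a)).1 hb)
  exact ⟨x, rfl⟩

theorem IsEnd.countable_segment {f : M ↪ₑ[L] N} (hf : f.IsEnd e) {a : M}
    (ha : {b | RelMap e ![b, a]}.Countable) : {b | RelMap e ![b, f a]}.Countable := by
  refine (ha.image f).mono fun b hb => ?_
  obtain ⟨y, rfl⟩ := hf a b hb
  exact ⟨y, (f.map_rel₂ e y a).1 hb, rfl⟩

end ElementaryEmbedding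

theorem Equiv.toElementaryEmbedding_isEnd {M N : Type*} [L.Structure M] [L.Structure N]
    {e : L.Relations 2} (E : M ≃[L] N) : E.toElementaryEmbedding.IsEnd e :=
  ElementaryEmbedding.isEnd_of_surjective E.surjective

def HasCountableSegments (e : L.Relations 2) (M : Type*) [L.Structure M] : Prop :=
  ∀ a : M, {b : M | RelMap e ![b, a]}.Countable

theorem HasCountableSegments.of_countable (e : L.Relations 2) (M : Type*) [L.Structure M]
    [Countable M] : HasCountableSegments e M :=
  fun _ => Set.to_countable _

namespace DirectLimit

variable {ι : Type*} [Preorder ι] [IsDirectedOrder ι] [Nonempty ι] {G : ι → Type*}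
  [∀ i, L.Structure (G i)] (f : ∀ i j, i ≤ j → G i ↪ₑ[L] G j)
  [DirectedSystem G fun i j h => f i j h]

instance directedSystem_toEmbedding : DirectedSystem G fun i j h => (f i j h).toEmbedding := ‹_›

theorem of_comp_f {i j : ι} (h : i ≤ j) :
    of L ι G (fun i j h => (f i j h).toEmbedding) j ∘ f i j h =
      of L ι G (fun i j h => (f i j h).toEmbedding) i :=
  funext fun _ => of_f

/-- Tarski's elementary chain theorem, for directed systems. -/
theorem realize_boundedFormula_of {α : Type*} {n : ℕ} (φ : L.BoundedFormula α n) (i : ι)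
    (v : α → G i) (xs : Fin n → G i) :
    φ.Realize (of L ι G (fun i j h => (f i j h).toEmbedding) i ∘ v)
      (of L ι G (fun i j h => (f i j h).toEmbedding) i ∘ xs) ↔ φ.Realize v xs := by
  induction φ generalizing i with
  | falsum => rfl
  | equal t₁ t₂ => exact (BoundedFormula.IsAtomic.equal t₁ t₂).isQF.realize_embedding _
  | rel R ts => exact (BoundedFormula.IsAtomic.rel R ts).isQF.realize_embedding _
  | imp φ ψ ihφ ihψ => exact imp_congr (ihφ i v xs) (ihψ i v xs)
  | all φ ih =>
    simp only [BoundedFormula.realize_all]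
    refine ⟨fun h b => (ih i v (Fin.snoc xs b)).1 ?_, fun h z => ?_⟩
    · rw [Fin.comp_snoc]
      exact h _
    · obtain ⟨j, y, rfl⟩ := exists_of z
      obtain ⟨k, hik, hjk⟩ := directed_of (· ≤ ·) i j
      -- evaluate the quantifier in a common upper bound `k`, where `f i k` is elementary
      have hk := ((f i k hik).map_boundedFormula φ.all v xs).2 h (f j k hjk y)
      rwa [← ih k, Fin.comp_snoc, ← Function.comp_assoc, ← Function.comp_assoc,
        of_comp_f, ← Function.comp_apply (f := of L ι G _ k), of_comp_f] at hk

noncomputable def elementaryOf (i : ι) :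
    G i ↪ₑ[L] DirectLimit G fun i j h => (f i j h).toEmbedding where
  toFun := of L ι G _ i
  map_formula' _ φ x := by
    simpa only [Formula.Realize, Unique.eq_default (_ ∘ default)] using
      realize_boundedFormula_of f φ i x default

@[simp]
theorem elementaryOf_apply (i : ι) (x : G i) :
    elementaryOf f i x = of L ι G (fun i j h => (f i j h).toEmbedding) i x := rfl

end DirectLimit

/-- Structures on subsets of a fixed `Ω` form a set, and inclusions between them compose on the
nose, which is what makes Zorn's lemma and unions of chains work without universe issues. -/
structure Stage (L : Language) (Ω : Type*) where
  carrier : Set Ω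
  [str : L.Structure carrier]

attribute [instance] Stage.str

namespace Stage

variable {Ω : Type*}

instance : Preorder (Stage L Ω) where
  le s t := ∃ f : s.carrier ↪ₑ[L] t.carrier, ∀ x, (f x : Ω) = x
  le_refl s := ⟨ElementaryEmbedding.refl L _, fun _ => rfl⟩
  le_trans _ _ _ := fun ⟨f, hf⟩ ⟨g, hg⟩ => ⟨g.comp f, fun x => (hg _).trans (hf x)⟩

variable {s t u : Stage L Ω}

noncomputable def inclusion (h : s ≤ t) : s.carrier ↪ₑ[L] t.carrier := h.choose

@[simp]
theorem coe_inclusion (h : s ≤ t) (x : s.carrier) : (inclusion h x : Ω) = x := h.choose_spec x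

theorem inclusion_eq (h : s ≤ t) {f : s.carrier ↪ₑ[L] t.carrier}
    (hf : ∀ x, (f x : Ω) = x) : inclusion h = f :=
  DFunLike.ext _ _ fun x => Subtype.ext (by simp [hf])

theorem mem_range_inclusion (h : s ≤ t) {y : t.carrier} :
    y ∈ Set.range (inclusion h) ↔ (y : Ω) ∈ s.carrier :=
  ⟨fun ⟨x, hx⟩ => hx ▸ by simp, fun hy => ⟨⟨y, hy⟩, Subtype.ext (by simp)⟩⟩

theorem carrier_subset (h : s ≤ t) : s.carrier ⊆ t.carrier :=
  fun x hx => by simpa using (inclusion h ⟨x, hx⟩).2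

section OfInjective

variable (L) {N : Type*} [L.Structure N] (g : N → Ω) (hg : g.Injective)

noncomputable def ofInjective : Stage L Ω where
  carrier := Set.range g
  str := (Equiv.ofInjective g hg).inducedStructure

noncomputable def equivOfInjective : N ≃[L] (ofInjective L g hg).carrier :=
  (Equiv.ofInjective g hg).inducedStructureEquiv

@[simp]
theorem coe_equivOfInjective (x : N) : (equivOfInjective L g hg x : Ω) = g x := rfl

end OfInjective

variable (e : L.Relations 2)

def EndLE (s t : Stage L Ω) : Prop :=
  ∃ h : s ≤ t, (inclusion h).IsEnd e

variable {e}

theorem EndLE.le (h : EndLE e s t) : s ≤ t := h.1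

theorem endLE_refl (s : Stage L Ω) : EndLE e s s :=
  ⟨le_rfl, ElementaryEmbedding.isEnd_of_surjective fun y => ⟨y, Subtype.ext (by simp)⟩⟩

theorem EndLE.trans (h₁ : EndLE e s t) (h₂ : EndLE e t u) : EndLE e s u :=
  ⟨h₁.le.trans h₂.le, by
    rw [inclusion_eq _ (f := (inclusion h₂.le).comp (inclusion h₁.le)) (by simp)]
    exact h₂.2.comp h₁.2⟩

theorem endLE_ofInjective {N : Type*} [L.Structure N] (f : s.carrier ↪ₑ[L] N) (hf : f.IsEnd e)
    {g : N → Ω} (hg : g.Injective) (hgf : ∀ x, g (f x) = x) :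
    EndLE e s (ofInjective L g hg) := by
  let f' := (equivOfInjective L g hg).toElementaryEmbedding.comp f
  have hf' : ∀ x, (f' x : Ω) = x := by simp [f', hgf]
  refine ⟨⟨f', hf'⟩, ?_⟩
  rw [inclusion_eq _ hf']
  exact (equivOfInjective L g hg).toElementaryEmbedding_isEnd.comp hf

section DirectedUnion

variable (c : Set (Stage L Ω))

instance : DirectedSystem (fun s : c => s.1.carrier) fun _ _ h => inclusion h where
  map_self _ _ := Subtype.ext (by simp)
  map_map _ _ _ _ _ _ := Subtype.ext (by simp)

variable [IsDirectedOrder c] [Nonempty c]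

abbrev Limit : Type _ :=
  DirectLimit (fun s : c => s.1.carrier) fun _ _ h => (inclusion h).toEmbedding

variable {c}

noncomputable abbrev Limit.of (s : c) : s.1.carrier ↪ₑ[L] Limit c :=
  DirectLimit.elementaryOf (G := fun s : c => s.1.carrier) (fun _ _ h => inclusion h) s

theorem Limit.of_eq_of_iff {s t : c} (x : s.1.carrier) (y : t.1.carrier) :
    Limit.of s x = Limit.of t y ↔ (x : Ω) = y := by
  obtain ⟨u, hsu, htu⟩ := directed_of (· ≤ ·) s t
  simp only [DirectLimit.elementaryOf_apply]
  rw [← DirectLimit.of_f (hij := hsu), ← DirectLimit.of_f (hij := htu),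
    (DirectLimit.of L c _ _ u).injective.eq_iff, Subtype.ext_iff]
  simp

variable (c) in
noncomputable def Limit.val (z : Limit c) : Ω :=
  (DirectLimit.exists_of z).choose_spec.choose

theorem Limit.exists_of (z : Limit c) : ∃ s x, Limit.of s x = z :=
  DirectLimit.exists_of z

theorem Limit.val_of (s : c) (x : s.1.carrier) : Limit.val c (Limit.of s x) = x :=
  (Limit.of_eq_of_iff _ _).1 (DirectLimit.exists_of _).choose_spec.choose_spec

theorem Limit.val_injective : (Limit.val c).Injective := by
  intro z₁ z₂ h
  obtain ⟨s, x, rfl⟩ := Limit.exists_of z₁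
  obtain ⟨t, y, rfl⟩ := Limit.exists_of z₂
  rw [Limit.val_of, Limit.val_of] at h
  exact (Limit.of_eq_of_iff x y).2 h

variable (c) in
noncomputable abbrev directedUnion : Stage L Ω :=
  ofInjective L (Limit.val c) Limit.val_injective

theorem le_directedUnion (s : c) : s.1 ≤ directedUnion c :=
  ⟨(equivOfInjective L _ _).toElementaryEmbedding.comp (Limit.of s), fun x => Limit.val_of s x⟩

theorem exists_mem_of_mem_directedUnion {x : Ω} (hx : x ∈ (directedUnion c).carrier) :
    ∃ s ∈ c, x ∈ s.carrier := by
  obtain ⟨z, rfl⟩ := hx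
  obtain ⟨s, y, rfl⟩ := Limit.exists_of z
  exact ⟨s, s.2, by rw [Limit.val_of]; exact y.2⟩

theorem endLE_directedUnion (hc : IsChain (EndLE e) c) {s : Stage L Ω} (hs : s ∈ c) :
    EndLE e s (directedUnion c) := by
  refine ⟨le_directedUnion ⟨s, hs⟩, fun a b hab => ?_⟩
  rw [mem_range_inclusion]
  obtain ⟨t, ht, hbt⟩ := exists_mem_of_mem_directedUnion b.2
  rcases eq_or_ne s t with rfl | hne
  · exact hbt
  rcases hc hs ht hne with hst | hts
  · have htU := le_directedUnion ⟨t, ht⟩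
    have hb : b = inclusion htU ⟨b, hbt⟩ := Subtype.ext (by simp)
    have ha : inclusion (le_directedUnion ⟨s, hs⟩) a = inclusion htU (inclusion hst.le a) :=
      Subtype.ext (by simp)
    rw [hb, ha, ElementaryEmbedding.map_rel₂] at hab
    simpa using (mem_range_inclusion hst.le).1 (hst.2 a _ hab)
  · exact carrier_subset hts.le hbt

theorem hasCountableSegments_directedUnion (hc : IsChain (EndLE e) c)
    (h : ∀ s ∈ c, HasCountableSegments e s.carrier) :
    HasCountableSegments e (directedUnion c).carrier := by
  intro a
  obtain ⟨s, hs, has⟩ := exists_mem_of_mem_directedUnion a.2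
  have ha : a = inclusion (endLE_directedUnion hc hs).le ⟨a, has⟩ := Subtype.ext (by simp)
  rw [ha]
  exact (endLE_directedUnion hc hs).2.countable_segment (h s hs _)

end DirectedUnion

theorem exists_maximal_endLE (b : Stage L Ω) (hb : HasCountableSegments e b.carrier) :
    ∃ m, EndLE e b m ∧ HasCountableSegments e m.carrier ∧
      ∀ t, EndLE e m t → HasCountableSegments e t.carrier → t.carrier ⊆ m.carrier := by
  let α := {s : Stage L Ω // EndLE e b s ∧ HasCountableSegments e s.carrier}
  have hbound : ∀ c : Set α, IsChain (fun s t : α => EndLE e s.1 t.1) c →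
      ∃ u : α, ∀ s ∈ c, EndLE e s.1 u.1 := by
    intro c hc
    rcases c.eq_empty_or_nonempty with rfl | ⟨s₀, hs₀⟩
    · exact ⟨⟨b, endLE_refl b, hb⟩, by simp⟩
    have hc' : IsChain (EndLE e) (Subtype.val '' c) :=
      hc.image_of_map_rel _ _ Subtype.val fun _ _ h => h
    have : IsDirectedOrder (Subtype.val '' c) :=
      (hc'.mono_rel fun _ _ h => h.le).directedOn.isDirectedOrder
    have : Nonempty (Subtype.val '' c) := ⟨⟨s₀.1, s₀, hs₀, rfl⟩⟩
    refine ⟨⟨directedUnion (Subtype.val '' c), ?_, ?_⟩, fun s hs => ?_⟩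
    · exact s₀.2.1.trans (endLE_directedUnion hc' ⟨s₀, hs₀, rfl⟩)
    · exact hasCountableSegments_directedUnion hc' fun _ ⟨s, _, hs⟩ => hs ▸ s.2.2
    · exact endLE_directedUnion hc' ⟨s, hs, rfl⟩
  obtain ⟨m, hm⟩ := exists_maximal_of_chains_bounded hbound fun h₁ h₂ => h₁.trans h₂
  exact ⟨m.1, m.2.1, m.2.2,
    fun t hmt ht => carrier_subset (hm ⟨t, m.2.1.trans hmt, ht⟩ hmt).le⟩

theorem exists_endLE_not_subset [Uncountable Ω] (s : Stage L Ω) (hs : s.carrier.Countable)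
    {N : Type*} [L.Structure N] [Countable N] (f : s.carrier ↪ₑ[L] N)
    (hf : ¬ Function.Surjective f) (hend : f.IsEnd e) :
    ∃ t : Stage L Ω, EndLE e s t ∧ t.carrier.Countable ∧ ¬ t.carrier ⊆ s.carrier := by
  have : Infinite (s.carrierᶜ : Set Ω) := by
    refine Set.infinite_coe_iff.2 fun hfin => not_countable (α := Ω) ?_
    exact Set.countable_univ_iff.1 (by simpa using hs.union hfin.countable)
  obtain ⟨j, hj⟩ := Countable.exists_injective_of_infinite N (s.carrierᶜ : Set Ω)
  -- elements of `s` stay in place, the new elements of `N` go to the complement of `s`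
  let g := Function.extend f Subtype.val (fun n => (j n : Ω))
  have hg : g.Injective := f.injective.injective_extend Subtype.val_injective
    (Subtype.val_injective.comp hj) <| disjoint_compl_right.mono (by simp)
      (Set.range_subset_iff.2 fun n => (j n).2)
  obtain ⟨n, hn⟩ := not_forall.1 hf
  refine ⟨ofInjective L g hg, endLE_ofInjective f hend hg (f.injective.extend_apply _ _),
    Set.countable_range g, fun hsub => (j n).2 ?_⟩
  simpa [g, Function.extend_apply' _ _ _ hn] using hsub ⟨n, rfl⟩

end Stage

end FirstOrder.Language

open FirstOrder.Language.Stage in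
theorem aleph1_like_elementary_end_extension_general
    (L : FirstOrder.Language.{0, 0})
    (e : L.Relations 2) (T : L.Theory)
    (H : ∀ M : T.ModelType, Countable M →
      ∃ (N : T.ModelType) (f : M ↪ₑ[L] N), Countable N ∧
        ¬ Function.Surjective f ∧
        ∀ (a : M) (b : (N : Type)), RelMap e ![b, f a] → ∃ a' : M, f a' = b) :
    ∀ M : T.ModelType, Countable M →
      ∃ (N : T.ModelType) (f : M ↪ₑ[L] N),
        Cardinal.mk N = Cardinal.aleph 1 ∧
        (∀ (a : M) (b : (N : Type)), RelMap e ![b, f a] → ∃ a' : M, f a' = b) ∧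
        ∀ a : (N : Type), {b : (N : Type) | RelMap e ![b, a]}.Countable := by
  intro M hM
  let Ω := (ℵ₁ : Cardinal.{0}).out
  have hΩ : #Ω = ℵ₁ := mk_out _
  have : Uncountable Ω := aleph0_lt_mk_iff.1 (hΩ ▸ aleph0_lt_aleph_one)
  obtain ⟨g, hg⟩ := Countable.exists_injective_of_infinite M Ω
  have : Countable (ofInjective L g hg).carrier := (Set.countable_range g).to_subtype
  obtain ⟨m, hbm, hseg, hmax⟩ :=
    exists_maximal_endLE (ofInjective L g hg) (HasCountableSegments.of_countable e _)
  let f := (inclusion hbm.le).comp (equivOfInjective L g hg).toElementaryEmbedding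
  have : m.carrier ⊨ T := (f.theory_model_iff T).1 inferInstance
  have : Nonempty m.carrier := ⟨f (Classical.arbitrary M)⟩
  have : Uncountable m.carrier := by
    refine not_countable_iff.1 fun hcount => ?_
    let m' := (Theory.ModelType.of T m.carrier).ulift.{0, 0, 0, _}
    let E : m.carrier ≃[L] m' := Equiv.inducedStructureEquiv _
    obtain ⟨N, f', hN, hsurj, hend⟩ := H m' (inferInstanceAs (Countable (ULift m.carrier)))
    obtain ⟨t, hmt, htc, hnsub⟩ := exists_endLE_not_subset m (Set.countable_coe_iff.1 hcount)
      (f'.comp E.toElementaryEmbedding) (fun h => hsurj (h.of_comp (g := E)))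
      ((show f'.IsEnd e from hend).comp E.toElementaryEmbedding_isEnd)
    have := htc.to_subtype
    exact hnsub (hmax t hmt (HasCountableSegments.of_countable e _))
  refine ⟨.of T m.carrier, f, ?_,
    hbm.2.comp (equivOfInjective L g hg).toElementaryEmbedding_isEnd, hseg⟩
  exact le_antisymm (hΩ ▸ mk_set_le _) (aleph_one_le_iff.2 (aleph0_lt_mk (α := m.carrier)))

/-- Keisler's theorem, step from (a) to (b): if every countable model of a theory `T`
(in a countable language with a distinguished binary relation `e`) has a proper
countable elementary end extension, then every countable model of `T` has an
ℵ₁-like elementary end extension. -/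
theorem aleph1_like_elementary_end_extension
    (L : FirstOrder.Language.{0, 0}) (hL : L.card ≤ Cardinal.aleph0)
    (e : L.Relations 2) (T : L.Theory)
    (H : ∀ M : T.ModelType, Countable M →
      ∃ (N : T.ModelType) (f : M ↪ₑ[L] N), Countable N ∧
        ¬ Function.Surjective f ∧
        ∀ (a : M) (b : (N : Type)), RelMap e ![b, f a] → ∃ a' : M, f a' = b) :
    ∀ M : T.ModelType, Countable M →
      ∃ (N : T.ModelType) (f : M ↪ₑ[L] N),
        Cardinal.mk N = Cardinal.aleph 1 ∧
        (∀ (a : M) (b : (N : Type)), RelMap e ![b, f a] → ∃ a' : M, f a' = b) ∧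
        ∀ a : (N : Type), {b : (N : Type) | RelMap e ![b, a]}.Countable :=
  aleph1_like_elementary_end_extension_general L e T H
end
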